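/- Let V > 0. There exists a finite constant C, depending only on V, such that for all Borel probability measures G0, G1 on ℝ with mean zero and variance bounded by V and every σ > 0: ∫_{{μ : |μ| > σ}} ∫_0^∞ s (∫_{−∞}^{∞} S_{G1,σ}(s, x) φ_σ(x − μ) dx) ds dG0(μ) ≤ C. -/

import Mathlib

open MeasureTheory Real Set
open scoped ENNReal

/-- The `N(0, σ²)` density `φ_σ(t) = (2πσ²)^{-1/2} exp(-t²/(2σ²))`. -/
noncomputable def gaussDens (σ t : ℝ) : ℝ :=
  (Real.sqrt (2 * Real.pi * σ ^ 2))⁻¹ * Real.exp (-t ^ 2 / (2 * σ ^ 2))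

/-- Marginal density `f_{G,σ}(x) = ∫ φ_σ(x-θ) dG(θ)`. -/
noncomputable def margDens (G : Measure ℝ) (σ x : ℝ) : ℝ :=
  ∫ θ, gaussDens σ (x - θ) ∂G

/-- Posterior mean `m_{G,σ}(x) = (∫ θ φ_σ(x-θ) dG(θ)) / f_{G,σ}(x)`. -/
noncomputable def postMean (G : Measure ℝ) (σ x : ℝ) : ℝ :=
  (∫ θ, θ * gaussDens σ (x - θ) ∂G) / margDens G σ x

/-- Posterior survival probability `S_{G,σ}(s,x) = (∫_{(s,∞)} φ_σ(x-θ) dG(θ)) / f_{G,σ}(x)`. -/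
noncomputable def postSurv (G : Measure ℝ) (σ s x : ℝ) : ℝ :=
  (∫ θ in Set.Ioi s, gaussDens σ (x - θ)  ∂G) / margDens G σ x

/-- `G` has mean zero and variance bounded by `V`. -/
def MeanZeroVarLe (G : Measure ℝ) (V : ℝ) : Prop :=
  Integrable (fun θ : ℝ => θ) G ∧ Integrable (fun θ : ℝ => θ ^ 2) G ∧
    (∫ θ, θ ∂G) = 0 ∧ (∫ θ, θ ^ 2 ∂G) ≤ V

/-- The tail condition `max(1 - G((-∞,s]), G((-∞,-s])) ≤ C s^{-k}` for all `s > 0`. -/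
def TailCond (G : Measure ℝ) (C k : ℝ) : Prop :=
  ∀ s : ℝ, 0 < s →
    max (1 - (G (Set.Iic s)).toReal) ((G (Set.Iic (-s))).toReal) ≤ C * s ^ (-k)

/-- Complementary standard Gaussian CDF `Φ̄(x) = ∫_x^∞ (2π)^{-1/2} exp(-t²/2) dt`. -/
noncomputable def compPhi (x : ℝ) : ℝ :=
  ∫ t in Set.Ioi x, (Real.sqrt (2 * Real.pi))⁻¹ * Real.exp (-t ^ 2 / 2)

lemma gaussDens_nonneg (σ t : ℝ) : 0 ≤ gaussDens σ t :=
  mul_nonneg (inv_nonneg.2 (Real.sqrt_nonneg _)) (Real.exp_nonneg _)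

lemma gaussDens_pos {σ : ℝ} (hσ : 0 < σ) (t : ℝ) : 0 < gaussDens σ t := by
  apply mul_pos _ (Real.exp_pos _)
  rw [inv_pos]
  apply Real.sqrt_pos.2
  positivity

lemma gaussDens_anti {σ : ℝ} (hσ : 0 < σ) {u v : ℝ} (h : |v| ≤ |u|) :
    gaussDens σ u ≤ gaussDens σ v := by
  unfold gaussDens
  apply mul_le_mul_of_nonneg_left _ (inv_nonneg.2 (Real.sqrt_nonneg _))
  apply Real.exp_le_exp.2
  have hv : v ^ 2 ≤ u ^ 2 := by
    rw [← sq_abs v, ← sq_abs u]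
    exact pow_le_pow_left₀ (abs_nonneg _) h 2
  have h2 : (0:ℝ) < 2 * σ ^ 2 := by positivity
  gcongr

lemma gaussDens_le_bound {σ : ℝ} (t : ℝ) : gaussDens σ t ≤ (Real.sqrt (2 * Real.pi * σ ^ 2))⁻¹ := by
  have : Real.exp (-t ^ 2 / (2 * σ ^ 2)) ≤ 1 := by
    rw [Real.exp_le_one_iff]
    by_cases hσ : σ = 0
    · simp [hσ]
    · apply div_nonpos_of_nonpos_of_nonneg (neg_nonpos.2 (sq_nonneg t)) (by positivity)
  calc gaussDens σ t ≤ (Real.sqrt (2 * Real.pi * σ ^ 2))⁻¹ * 1 :=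
        mul_le_mul_of_nonneg_left this (inv_nonneg.2 (Real.sqrt_nonneg _))
    _ = _ := mul_one _

lemma gaussDens_continuous (σ : ℝ) : Continuous (gaussDens σ) := by
  unfold gaussDens
  fun_prop

lemma ofReal_int_le {α : Type*} [MeasurableSpace α] (ν : Measure α) (f : α → ℝ)
    (hf : ∀ x, 0 ≤ f x) :
    ENNReal.ofReal (∫ x, f x ∂ν) ≤ ∫⁻ x, ENNReal.ofReal (f x) ∂ν := by
  by_cases h : Integrable f ν
  · rw [ofReal_integral_eq_lintegral_ofReal h (ae_of_all _ hf)]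
  · rw [integral_undef h]; simp

lemma cheb (G : Measure ℝ) [IsProbabilityMeasure G]
    (h2 : Integrable (fun θ : ℝ => θ ^ 2) G) {V b : ℝ}
    (hV : (∫ θ, θ ^ 2 ∂G) ≤ V) (hb : 0 < b) :
    (G {θ : ℝ | b < |θ|}).toReal * b ^ 2 ≤ V := by
  have hS : MeasurableSet {θ : ℝ | b < |θ|} :=
    measurableSet_lt measurable_const continuous_abs.measurable
  have h1 : (G {θ : ℝ | b < |θ|}).toReal * b ^ 2 = ∫ θ in {θ : ℝ | b < |θ|}, b ^ 2 ∂G := by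
    rw [setIntegral_const]; rfl
  rw [h1]
  calc ∫ θ in {θ : ℝ | b < |θ|}, b ^ 2 ∂G ≤ ∫ θ in {θ : ℝ | b < |θ|}, θ ^ 2 ∂G := by
        apply setIntegral_mono_on (integrableOn_const (measure_ne_top _ _))
          h2.integrableOn hS
        intro θ hθ
        have : b ≤ |θ| := le_of_lt hθ
        calc b ^ 2 ≤ |θ| ^ 2 := pow_le_pow_left₀ hb.le this 2
          _ = θ ^ 2 := sq_abs θ
    _ ≤ ∫ θ, θ ^ 2 ∂G := setIntegral_le_integral h2 (ae_of_all _ (fun θ => sq_nonneg θ))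
    _ ≤ V := hV


lemma integrable_gauss (G : Measure ℝ) [IsFiniteMeasure G] (σ x : ℝ) :
    Integrable (fun θ => gaussDens σ (x - θ)) G := by
  apply Integrable.mono' (integrable_const ((Real.sqrt (2 * Real.pi * σ ^ 2))⁻¹))
  · exact ((gaussDens_continuous σ).comp (continuous_const.sub continuous_id)).aestronglyMeasurable
  · refine ae_of_all _ fun θ => ?_
    rw [Real.norm_eq_abs, abs_of_nonneg (gaussDens_nonneg _ _)]
    exact gaussDens_le_bound _

lemma margDens_lower {V : ℝ} (hV : 0 < V) (G : Measure ℝ) [IsProbabilityMeasure G]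
    (hG : MeanZeroVarLe G V) {σ : ℝ} (hσ : 0 < σ) (x : ℝ) :
    gaussDens σ (|x| + Real.sqrt (2 * V)) * (1 / 2) ≤ margDens G σ x := by
  set a := Real.sqrt (2 * V) with ha
  have ha0 : 0 < a := Real.sqrt_pos.2 (by linarith)
  have ha2 : a ^ 2 = 2 * V := Real.sq_sqrt (by linarith)
  have hSc : MeasurableSet {θ : ℝ | a < |θ|} :=
    measurableSet_lt measurable_const continuous_abs.measurable
  have hIcc : Icc (-a) a = {θ : ℝ | a < |θ|}ᶜ := by
    ext θ
    simp only [Set.mem_Icc, Set.mem_compl_iff, Set.mem_setOf_eq, not_lt]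
    exact abs_le.symm
  have hcheb := cheb G hG.2.1 hG.2.2.2 ha0
  have hm : (G {θ : ℝ | a < |θ|}).toReal ≤ 1 / 2 := by
    rw [ha2] at hcheb
    nlinarith
  have hIccm : (1:ℝ) / 2 ≤ (G (Icc (-a) a)).toReal := by
    rw [hIcc, prob_compl_eq_one_sub hSc]
    have h1 : (G {θ : ℝ | a < |θ|}) ≤ 1 := prob_le_one
    rw [ENNReal.toReal_sub_of_le h1 ENNReal.one_ne_top]
    simp only [ENNReal.toReal_one]
    linarith
  have step1 : ∫ θ in Icc (-a) a, gaussDens σ (x - θ) ∂G ≤ margDens G σ x :=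
    setIntegral_le_integral (integrable_gauss G σ x)
      (ae_of_all _ fun θ => gaussDens_nonneg _ _)
  have step2 : gaussDens σ (|x| + a) * (1 / 2) ≤ ∫ θ in Icc (-a) a, gaussDens σ (x - θ) ∂G := by
    calc gaussDens σ (|x| + a) * (1 / 2)
        ≤ gaussDens σ (|x| + a) * (G (Icc (-a) a)).toReal := by
          apply mul_le_mul_of_nonneg_left hIccm (gaussDens_nonneg _ _)
      _ = ∫ θ in Icc (-a) a, gaussDens σ (|x| + a) ∂G := by rw [setIntegral_const, smul_eq_mul, measureReal_def]; ring
      _ ≤ ∫ θ in Icc (-a) a, gaussDens σ (x - θ) ∂G := by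
          apply setIntegral_mono_on (integrableOn_const (measure_ne_top _ _))
            (integrable_gauss G σ x).integrableOn measurableSet_Icc
          intro θ hθ
          apply gaussDens_anti hσ
          rw [Set.mem_Icc] at hθ
          have hθa : |θ| ≤ a := abs_le.2 hθ
          have : |x - θ| ≤ |x| + |θ| := abs_sub x θ
          rw [abs_of_nonneg (by positivity : (0:ℝ) ≤ |x| + a)]
          linarith
  linarith

lemma margDens_pos {V : ℝ} (hV : 0 < V) (G : Measure ℝ) [IsProbabilityMeasure G]
    (hG : MeanZeroVarLe G V) {σ : ℝ} (hσ : 0 < σ) (x : ℝ) : 0 < margDens G σ x := by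
  have := margDens_lower hV G hG hσ x
  have h2 := gaussDens_pos hσ (|x| + Real.sqrt (2 * V))
  linarith

/-- the K-split pointwise bound -/
lemma split_bound {V : ℝ} (hV : 0 < V) (G : Measure ℝ) [IsProbabilityMeasure G]
    (hG : MeanZeroVarLe G V) {σ : ℝ} (hσ : 0 < σ) (x θ : ℝ) :
    gaussDens σ (x - θ) * (θ ^ 2 / 2) ≤
      ((2 * |x| + 2 * Real.sqrt (2 * V)) ^ 2 / 2) * gaussDens σ (x - θ)
        + margDens G σ x * θ ^ 2 := by
  obtain ⟨a, ha⟩ : ∃ a : ℝ, a = Real.sqrt (2 * V) := ⟨_, rfl⟩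
  rw [← ha]
  have ha0 : 0 < a := ha ▸ Real.sqrt_pos.2 (by linarith)
  obtain ⟨K, hK⟩ : ∃ K : ℝ, K = 2 * |x| + 2 * a := ⟨_, rfl⟩
  rw [← hK]
  have hg0 : 0 ≤ gaussDens σ (x - θ) := gaussDens_nonneg _ _
  have hf0 : 0 < margDens G σ x := margDens_pos hV G hG hσ x
  by_cases hθ : |θ| ≤ K
  · have h2 : θ ^ 2 ≤ K ^ 2 := by
      rw [← sq_abs θ]
      apply pow_le_pow_left₀ (abs_nonneg _) hθ 2
    have h3 : gaussDens σ (x - θ) * (θ ^ 2 / 2) ≤ gaussDens σ (x - θ) * (K ^ 2 / 2) := by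
      apply mul_le_mul_of_nonneg_left _ hg0
      linarith
    have h4 : 0 ≤ margDens G σ x * θ ^ 2 := mul_nonneg hf0.le (sq_nonneg θ)
    have h5 : gaussDens σ (x - θ) * (K ^ 2 / 2) = K ^ 2 / 2 * gaussDens σ (x - θ) := mul_comm _ _
    linarith
  · push_neg at hθ
    have habs : |x| + a ≤ |x - θ| := by
      have h1 : |θ| - |x| ≤ |x - θ| := by
        have := abs_sub_abs_le_abs_sub θ x
        rw [abs_sub_comm] at this
        linarith
      have h6 : K - |x| ≤ |x - θ| := by linarith
      rw [hK] at h6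
      linarith
    have hgle : gaussDens σ (x - θ) ≤ gaussDens σ (|x| + a) := by
      apply gaussDens_anti hσ
      rwa [abs_of_nonneg (by positivity : (0:ℝ) ≤ |x| + a)]
    have hmarg := margDens_lower hV G hG hσ x
    rw [← ha] at hmarg
    have hle : gaussDens σ (x - θ) ≤ 2 * margDens G σ x := by linarith
    have h3 : gaussDens σ (x - θ) * (θ ^ 2 / 2) ≤ 2 * margDens G σ x * (θ ^ 2 / 2) :=
      mul_le_mul_of_nonneg_right hle (by positivity)
    have h4 : 0 ≤ K ^ 2 / 2 * gaussDens σ (x - θ) := by positivity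
    have h5 : 2 * margDens G σ x * (θ ^ 2 / 2) = margDens G σ x * θ ^ 2 := by ring
    linarith

lemma gaussDens_eq {σ : ℝ} (hσ : 0 < σ) :
    gaussDens σ = fun t =>
      (Real.sqrt (2 * Real.pi * σ ^ 2))⁻¹ * Real.exp (-(2 * σ ^ 2)⁻¹ * t ^ 2) := by
  funext t
  unfold gaussDens
  congr 1
  congr 1
  field_simp

lemma sqrt_pos' {σ : ℝ} (hσ : 0 < σ) : 0 < Real.sqrt (2 * Real.pi * σ ^ 2) :=
  Real.sqrt_pos.2 (by positivity)

lemma integrable_gaussDens {σ : ℝ} (hσ : 0 < σ) : Integrable (gaussDens σ) := by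
  rw [gaussDens_eq hσ]
  exact (integrable_exp_neg_mul_sq (by positivity : (0:ℝ) < (2 * σ ^ 2)⁻¹)).const_mul _

lemma int_gaussDens {σ : ℝ} (hσ : 0 < σ) : ∫ t, gaussDens σ t = 1 := by
  rw [gaussDens_eq hσ]
  rw [integral_const_mul]
  rw [integral_gaussian]
  have h1 : Real.pi / (2 * σ ^ 2)⁻¹ = 2 * Real.pi * σ ^ 2 := by
    field_simp
  rw [h1]
  exact inv_mul_cancel₀ (ne_of_gt (sqrt_pos' hσ))

lemma integrable_gaussDens_sub {σ : ℝ} (hσ : 0 < σ) (μ : ℝ) :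
    Integrable (fun x => gaussDens σ (x - μ)) :=
  (integrable_gaussDens hσ).comp_sub_right μ

lemma int_gaussDens_sub {σ : ℝ} (hσ : 0 < σ) (μ : ℝ) :
    ∫ x, gaussDens σ (x - μ) = 1 := by
  rw [integral_sub_right_eq_self (gaussDens σ) μ]
  exact int_gaussDens hσ

lemma sq_exp_bound {b : ℝ} (hb : 0 < b) (x : ℝ) :
    x ^ 2 * Real.exp (-(b * x ^ 2)) ≤ b⁻¹ * Real.exp (-(b / 2) * x ^ 2) := by
  have hu : 0 ≤ b * x ^ 2 := by positivity
  obtain ⟨u, hu'⟩ : ∃ u : ℝ, u = b * x ^ 2 := ⟨_, rfl⟩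
  have key : u ≤ Real.exp (u / 2) := by
    have h1 : u / 4 + 1 ≤ Real.exp (u / 4) := Real.add_one_le_exp _
    have h2 : Real.exp (u / 4) * Real.exp (u / 4) = Real.exp (u / 2) := by
      rw [← Real.exp_add]; ring_nf
    nlinarith [sq_nonneg (u / 4 - 1), Real.exp_pos (u / 4)]
  have h3 : u * Real.exp (-u) ≤ Real.exp (-(u / 2)) := by
    have h4 := mul_le_mul_of_nonneg_right key (Real.exp_nonneg (-u))
    rw [← Real.exp_add] at h4
    have h5 : u / 2 + -u = -(u / 2) := by ring
    rwa [h5] at h4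
  have h6 : x ^ 2 * Real.exp (-(b * x ^ 2)) = b⁻¹ * (u * Real.exp (-u)) := by
    rw [hu']; field_simp
  rw [h6]
  have h7 : -(b / 2) * x ^ 2 = -(u / 2) := by rw [hu']; ring
  rw [h7]
  exact mul_le_mul_of_nonneg_left h3 (inv_nonneg.2 hb.le)

lemma integrable_sq_gaussDens {σ : ℝ} (hσ : 0 < σ) :
    Integrable (fun t => t ^ 2 * gaussDens σ t) := by
  have hb : (0:ℝ) < (2 * σ ^ 2)⁻¹ := by positivity
  apply Integrable.mono'
    (((integrable_exp_neg_mul_sq (by positivity : (0:ℝ) < (2 * σ ^ 2)⁻¹ / 2)).const_mul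
      ((Real.sqrt (2 * Real.pi * σ ^ 2))⁻¹ * ((2 * σ ^ 2)⁻¹)⁻¹)))
  · exact (continuous_pow 2 |>.mul (continuous_const.mul
      (Real.continuous_exp.comp (by fun_prop)))).aestronglyMeasurable
  · refine ae_of_all _ fun t => ?_
    rw [Real.norm_eq_abs, abs_of_nonneg (mul_nonneg (sq_nonneg t) (gaussDens_nonneg σ t))]
    rw [gaussDens_eq hσ]
    have := sq_exp_bound hb t
    calc t ^ 2 * ((Real.sqrt (2 * Real.pi * σ ^ 2))⁻¹ * Real.exp (-(2 * σ ^ 2)⁻¹ * t ^ 2))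
        = (Real.sqrt (2 * Real.pi * σ ^ 2))⁻¹ * (t ^ 2 * Real.exp (-((2 * σ ^ 2)⁻¹ * t ^ 2))) := by
          ring_nf
      _ ≤ (Real.sqrt (2 * Real.pi * σ ^ 2))⁻¹ *
          (((2 * σ ^ 2)⁻¹)⁻¹ * Real.exp (-((2 * σ ^ 2)⁻¹ / 2) * t ^ 2)) := by
          apply mul_le_mul_of_nonneg_left _ (inv_nonneg.2 (Real.sqrt_nonneg _))
          exact sq_exp_bound hb t
      _ = (Real.sqrt (2 * Real.pi * σ ^ 2))⁻¹ * ((2 * σ ^ 2)⁻¹)⁻¹ *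
          Real.exp (-((2 * σ ^ 2)⁻¹ / 2) * t ^ 2) := by ring

lemma int_sq_gaussDens_le {σ : ℝ} (hσ : 0 < σ) :
    ∫ t, t ^ 2 * gaussDens σ t ≤ 3 * σ ^ 2 := by
  have hb : (0:ℝ) < (2 * σ ^ 2)⁻¹ := by positivity
  set c := (Real.sqrt (2 * Real.pi * σ ^ 2))⁻¹ with hc
  have step1 : ∫ t, t ^ 2 * gaussDens σ t ≤
      ∫ t, c * (((2 * σ ^ 2)⁻¹)⁻¹ * Real.exp (-((2 * σ ^ 2)⁻¹ / 2) * t ^ 2)) := by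
    apply integral_mono (integrable_sq_gaussDens hσ)
    · exact ((integrable_exp_neg_mul_sq (by positivity : (0:ℝ) < (2 * σ ^ 2)⁻¹ / 2)).const_mul
        _).const_mul _
    · intro t
      rw [gaussDens_eq hσ]
      calc t ^ 2 * (c * Real.exp (-(2 * σ ^ 2)⁻¹ * t ^ 2))
          = c * (t ^ 2 * Real.exp (-((2 * σ ^ 2)⁻¹ * t ^ 2))) := by ring_nf
        _ ≤ c * (((2 * σ ^ 2)⁻¹)⁻¹ * Real.exp (-((2 * σ ^ 2)⁻¹ / 2) * t ^ 2)) := by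
            apply mul_le_mul_of_nonneg_left (sq_exp_bound hb t)
              (inv_nonneg.2 (Real.sqrt_nonneg _))
  have step2 : ∫ t, c * (((2 * σ ^ 2)⁻¹)⁻¹ * Real.exp (-((2 * σ ^ 2)⁻¹ / 2) * t ^ 2))
      = c * (2 * σ ^ 2) * Real.sqrt (Real.pi / ((2 * σ ^ 2)⁻¹ / 2)) := by
    rw [integral_const_mul, integral_const_mul, integral_gaussian]
    rw [inv_inv]
    ring
  rw [step2] at step1
  have h1 : Real.pi / ((2 * σ ^ 2)⁻¹ / 2) = 2 * (2 * Real.pi * σ ^ 2) := by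
    field_simp
  rw [h1] at step1
  rw [Real.sqrt_mul (by norm_num : (0:ℝ) ≤ 2)] at step1
  have h2 : c * (2 * σ ^ 2) * (Real.sqrt 2 * Real.sqrt (2 * Real.pi * σ ^ 2))
      = 2 * σ ^ 2 * Real.sqrt 2 * (c * Real.sqrt (2 * Real.pi * σ ^ 2)) := by ring
  have h3 : c * Real.sqrt (2 * Real.pi * σ ^ 2) = 1 :=
    inv_mul_cancel₀ (ne_of_gt (sqrt_pos' hσ))
  rw [h2, h3, mul_one] at step1
  have h4 : Real.sqrt 2 ≤ 3 / 2 := by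
    nlinarith [Real.sq_sqrt (by norm_num : (0:ℝ) ≤ 2), Real.sqrt_nonneg 2]
  nlinarith [sq_nonneg σ, hσ]

lemma integrable_sq_gaussDens_sub {σ : ℝ} (hσ : 0 < σ) (μ : ℝ) :
    Integrable (fun x => x ^ 2 * gaussDens σ (x - μ)) := by
  have hdom : Integrable (fun x => 2 * ((x - μ) ^ 2 * gaussDens σ (x - μ))
      + 2 * μ ^ 2 * gaussDens σ (x - μ)) :=
    (((integrable_sq_gaussDens hσ).comp_sub_right μ).const_mul 2).add
      ((integrable_gaussDens_sub hσ μ).const_mul (2 * μ ^ 2))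
  apply Integrable.mono' hdom
  · exact (continuous_pow 2 |>.mul ((gaussDens_continuous σ).comp
      (continuous_id.sub continuous_const))).aestronglyMeasurable
  · refine ae_of_all _ fun x => ?_
    rw [Real.norm_eq_abs,
      abs_of_nonneg (mul_nonneg (sq_nonneg x) (gaussDens_nonneg σ (x - μ)))]
    have hg := gaussDens_nonneg σ (x - μ)
    have hx : x ^ 2 ≤ 2 * (x - μ) ^ 2 + 2 * μ ^ 2 := by nlinarith [sq_nonneg (x - 2 * μ)]
    nlinarith [mul_le_mul_of_nonneg_right hx hg]

lemma int_sq_gaussDens_sub_le {σ : ℝ} (hσ : 0 < σ) (μ : ℝ) :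
    ∫ x, x ^ 2 * gaussDens σ (x - μ) ≤ 6 * σ ^ 2 + 2 * μ ^ 2 := by
  have hdom : Integrable (fun x => 2 * ((x - μ) ^ 2 * gaussDens σ (x - μ))
      + 2 * μ ^ 2 * gaussDens σ (x - μ)) :=
    (((integrable_sq_gaussDens hσ).comp_sub_right μ).const_mul 2).add
      ((integrable_gaussDens_sub hσ μ).const_mul (2 * μ ^ 2))
  have step1 : ∫ x, x ^ 2 * gaussDens σ (x - μ) ≤
      ∫ x, (2 * ((x - μ) ^ 2 * gaussDens σ (x - μ)) + 2 * μ ^ 2 * gaussDens σ (x - μ)) := by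
    apply integral_mono (integrable_sq_gaussDens_sub hσ μ) hdom
    intro x
    dsimp only
    have hg := gaussDens_nonneg σ (x - μ)
    have hx : x ^ 2 ≤ 2 * (x - μ) ^ 2 + 2 * μ ^ 2 := by nlinarith [sq_nonneg (x - 2 * μ)]
    nlinarith [mul_le_mul_of_nonneg_right hx hg]
  have step2 : ∫ x, (2 * ((x - μ) ^ 2 * gaussDens σ (x - μ)) + 2 * μ ^ 2 * gaussDens σ (x - μ))
      = 2 * (∫ t, t ^ 2 * gaussDens σ t) + 2 * μ ^ 2 * (∫ x, gaussDens σ (x - μ)) := by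
    rw [integral_add (((integrable_sq_gaussDens hσ).comp_sub_right μ).const_mul 2)
      ((integrable_gaussDens_sub hσ μ).const_mul (2 * μ ^ 2))]
    rw [integral_const_mul, integral_const_mul]
    congr 1
    congr 1
    exact integral_sub_right_eq_self (fun t => t ^ 2 * gaussDens σ t) μ
  rw [step2, int_gaussDens_sub hσ μ, mul_one] at step1
  have := int_sq_gaussDens_le hσ
  linarith

/-- measurability of `(s, x) ↦ ∫ θ in Ioi s, gaussDens σ (x - θ) ∂G` -/
lemma sm_N (G : Measure ℝ) [IsProbabilityMeasure G] (σ : ℝ) :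
    StronglyMeasurable (fun p : ℝ × ℝ => ∫ θ in Ioi p.1, gaussDens σ (p.2 - θ) ∂G) := by
  have h : StronglyMeasurable (fun q : (ℝ × ℝ) × ℝ =>
      Set.indicator {r : (ℝ × ℝ) × ℝ | r.1.1 < r.2}
        (fun q : (ℝ × ℝ) × ℝ => gaussDens σ (q.1.2 - q.2)) q) := by
    apply StronglyMeasurable.indicator
    · exact ((gaussDens_continuous σ).comp
        ((continuous_snd.comp continuous_fst).sub continuous_snd)).stronglyMeasurable
    · exact measurableSet_lt (measurable_fst.comp measurable_fst) measurable_snd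
  have h2 := h.integral_prod_right' (ν := G)
  have heq : (fun p : ℝ × ℝ => ∫ θ, Set.indicator {r : (ℝ × ℝ) × ℝ | r.1.1 < r.2}
      (fun q : (ℝ × ℝ) × ℝ => gaussDens σ (q.1.2 - q.2)) (p, θ) ∂G)
      = fun p : ℝ × ℝ => ∫ θ in Ioi p.1, gaussDens σ (p.2 - θ) ∂G := by
    funext p
    rw [← integral_indicator measurableSet_Ioi]
    rfl
  rw [heq] at h2
  exact h2

lemma sm_marg (G : Measure ℝ) [IsProbabilityMeasure G] (σ : ℝ) :
    StronglyMeasurable (margDens G σ) := by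
  have h : StronglyMeasurable (fun q : ℝ × ℝ => gaussDens σ (q.1 - q.2)) :=
    ((gaussDens_continuous σ).comp (continuous_fst.sub continuous_snd)).stronglyMeasurable
  exact h.integral_prod_right'

lemma sm_postSurv (G : Measure ℝ) [IsProbabilityMeasure G] (σ : ℝ) :
    StronglyMeasurable (fun p : ℝ × ℝ => postSurv G σ p.1 p.2) := by
  simp only [postSurv]
  exact ((sm_N G σ).measurable.div
    ((sm_marg G σ).measurable.comp measurable_snd)).stronglyMeasurable

/-- Lemma A : the `s`-lintegral of the survival function is bounded. -/
lemma lemA {V : ℝ} (hV : 0 < V) (G1 : Measure ℝ) [IsProbabilityMeasure G1]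
    (hG1 : MeanZeroVarLe G1 V) {σ : ℝ} (hσ : 0 < σ) (x : ℝ) :
    ∫⁻ s in Ioi (0:ℝ), ENNReal.ofReal (s * postSurv G1 σ s x)
      ≤ ENNReal.ofReal (4 * x ^ 2 + 9 * V) := by
  have hf0 : 0 < margDens G1 σ x := margDens_pos hV G1 hG1 hσ x
  have hx40 : (0:ℝ) ≤ 4 * x ^ 2 + 9 * V := by positivity
  -- rewrite integrand
  have hcong : ∫⁻ s in Ioi (0:ℝ), ENNReal.ofReal (s * postSurv G1 σ s x)
      = ∫⁻ s in Ioi (0:ℝ), ENNReal.ofReal (s * ∫ θ in Ioi s, gaussDens σ (x - θ) ∂G1)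
          * ENNReal.ofReal (margDens G1 σ x)⁻¹ := by
    apply setLIntegral_congr_fun measurableSet_Ioi
    intro s hs
    simp only [postSurv]
    rw [div_eq_mul_inv, ← mul_assoc, ← ENNReal.ofReal_mul]
    exact mul_nonneg (le_of_lt hs) (integral_nonneg fun θ => gaussDens_nonneg _ _)
  rw [hcong]
  rw [lintegral_mul_const' _ _ ENNReal.ofReal_ne_top]
  -- main bound on the N-part
  have key : ∫⁻ s in Ioi (0:ℝ), ENNReal.ofReal (s * ∫ θ in Ioi s, gaussDens σ (x - θ) ∂G1)
      ≤ ENNReal.ofReal (margDens G1 σ x * (4 * x ^ 2 + 9 * V)) := by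
    set g : ℝ → ℝ → ℝ≥0∞ := fun s θ =>
      (if s < θ then 1 else 0) * ENNReal.ofReal (s * gaussDens σ (x - θ)) with hg
    have step_a : ∫⁻ s in Ioi (0:ℝ), ENNReal.ofReal (s * ∫ θ in Ioi s, gaussDens σ (x - θ) ∂G1)
        ≤ ∫⁻ s in Ioi (0:ℝ), ∫⁻ θ, g s θ ∂G1 := by
      apply lintegral_mono_ae
      rw [ae_restrict_iff' measurableSet_Ioi]
      apply ae_of_all
      intro s hs
      have h1 : s * ∫ θ in Ioi s, gaussDens σ (x - θ) ∂G1
          = ∫ θ, (Ioi s).indicator (fun θ => s * gaussDens σ (x - θ)) θ ∂G1 := by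
        rw [integral_indicator measurableSet_Ioi]
        exact (integral_const_mul s _).symm
      rw [h1]
      calc ENNReal.ofReal (∫ θ, (Ioi s).indicator (fun θ => s * gaussDens σ (x - θ)) θ ∂G1)
          ≤ ∫⁻ θ, ENNReal.ofReal ((Ioi s).indicator (fun θ => s * gaussDens σ (x - θ)) θ) ∂G1 :=
            ofReal_int_le _ _ (fun θ => Set.indicator_nonneg
              (fun θ _ => mul_nonneg (le_of_lt hs) (gaussDens_nonneg _ _)) θ)
        _ = ∫⁻ θ, g s θ ∂G1 := by
            apply lintegral_congr
            intro θ
            simp only [hg]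
            simp only [Set.indicator_apply, Set.mem_Ioi]
            split_ifs with h
            · rw [one_mul]
            · simp
    have hmeas_g : Measurable (fun z : ℝ × ℝ => g z.1 z.2) := by
      apply Measurable.mul
      · exact Measurable.ite (measurableSet_lt measurable_fst measurable_snd)
          measurable_const measurable_const
      · exact ENNReal.measurable_ofReal.comp (measurable_fst.mul
          (((gaussDens_continuous σ).measurable).comp (measurable_const.sub measurable_snd)))
    have swap : ∫⁻ s in Ioi (0:ℝ), ∫⁻ θ, g s θ ∂G1
        = ∫⁻ θ, (∫⁻ s in Ioi (0:ℝ), g s θ) ∂G1 :=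
      lintegral_lintegral_swap hmeas_g.aemeasurable
    have inner : ∀ θ : ℝ, (∫⁻ s in Ioi (0:ℝ), g s θ)
        ≤ ENNReal.ofReal (gaussDens σ (x - θ) * (θ ^ 2 / 2)) := by
      intro θ
      by_cases hθ : 0 < θ
      · have hcg : ∀ s ∈ Ioi (0:ℝ), g s θ = (Iio θ).indicator
            (fun s => ENNReal.ofReal s * ENNReal.ofReal (gaussDens σ (x - θ))) s := by
          intro s hs
          simp only [hg]
          simp only [Set.indicator_apply, Set.mem_Iio]
          split_ifs with h
          · rw [one_mul, ENNReal.ofReal_mul (le_of_lt hs)]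
          · simp
        rw [setLIntegral_congr_fun measurableSet_Ioi hcg]
        rw [lintegral_indicator measurableSet_Iio, Measure.restrict_restrict measurableSet_Iio,
          Set.Iio_inter_Ioi]
        rw [lintegral_mul_const _ ENNReal.measurable_ofReal]
        have hIntOn : IntegrableOn (fun s : ℝ => s) (Ioo 0 θ) :=
          (continuous_id.integrableOn_Icc).mono_set Ioo_subset_Icc_self
        have hlig : ∫⁻ s in Ioo (0:ℝ) θ, ENNReal.ofReal s = ENNReal.ofReal (θ ^ 2 / 2) := by
          rw [← ofReal_integral_eq_lintegral_ofReal hIntOn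
            ((ae_restrict_iff' measurableSet_Ioo).2 (ae_of_all _ fun s hs => le_of_lt hs.1))]
          congr 1
          rw [← integral_Ioc_eq_integral_Ioo, ← intervalIntegral.integral_of_le (le_of_lt hθ)]
          rw [integral_id]
          ring
        rw [hlig, ← ENNReal.ofReal_mul (by positivity), mul_comm (θ ^ 2 / 2)]
      · have hz : ∀ s ∈ Ioi (0:ℝ), g s θ = 0 := by
          intro s hs
          simp only [hg]
          have : ¬ s < θ := by push_neg at hθ ⊢; linarith [hs.out]
          rw [if_neg this, zero_mul]
        rw [setLIntegral_congr_fun measurableSet_Ioi hz]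
        simp
    calc ∫⁻ s in Ioi (0:ℝ), ENNReal.ofReal (s * ∫ θ in Ioi s, gaussDens σ (x - θ) ∂G1)
        ≤ ∫⁻ s in Ioi (0:ℝ), ∫⁻ θ, g s θ ∂G1 := step_a
      _ = ∫⁻ θ, (∫⁻ s in Ioi (0:ℝ), g s θ) ∂G1 := swap
      _ ≤ ∫⁻ θ, ENNReal.ofReal (gaussDens σ (x - θ) * (θ ^ 2 / 2)) ∂G1 :=
          lintegral_mono inner
      _ ≤ ∫⁻ θ, ENNReal.ofReal (((2 * |x| + 2 * Real.sqrt (2 * V)) ^ 2 / 2)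
            * gaussDens σ (x - θ) + margDens G1 σ x * θ ^ 2) ∂G1 :=
          lintegral_mono fun θ => ENNReal.ofReal_le_ofReal (split_bound hV G1 hG1 hσ x θ)
      _ = ENNReal.ofReal (∫ θ, (((2 * |x| + 2 * Real.sqrt (2 * V)) ^ 2 / 2)
            * gaussDens σ (x - θ) + margDens G1 σ x * θ ^ 2) ∂G1) := by
          rw [ofReal_integral_eq_lintegral_ofReal]
          · exact ((integrable_gauss G1 σ x).const_mul _).add (hG1.2.1.const_mul _)
          · apply ae_of_all
            intro θ
            simp only [Pi.zero_apply]
            have h1 : (0:ℝ) ≤ ((2 * |x| + 2 * Real.sqrt (2 * V)) ^ 2 / 2)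
                * gaussDens σ (x - θ) := mul_nonneg (by positivity) (gaussDens_nonneg _ _)
            have h2 : (0:ℝ) ≤ margDens G1 σ x * θ ^ 2 :=
              mul_nonneg hf0.le (sq_nonneg θ)
            linarith
      _ ≤ ENNReal.ofReal (margDens G1 σ x * (4 * x ^ 2 + 9 * V)) := by
          apply ENNReal.ofReal_le_ofReal
          rw [integral_add ((integrable_gauss G1 σ x).const_mul _) (hG1.2.1.const_mul _)]
          rw [integral_const_mul, integral_const_mul]
          have hmd : ∫ θ, gaussDens σ (x - θ) ∂G1 = margDens G1 σ x := rfl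
          rw [hmd]
          have ha2 : Real.sqrt (2 * V) ^ 2 = 2 * V := Real.sq_sqrt (by linarith)
          have hK2 : (2 * |x| + 2 * Real.sqrt (2 * V)) ^ 2 / 2 ≤ 4 * x ^ 2 + 8 * V := by
            nlinarith [sq_nonneg (|x| - Real.sqrt (2 * V)), sq_abs x]
          have hIV : ∫ θ, θ ^ 2 ∂G1 ≤ V := hG1.2.2.2
          have hIV0 : (0:ℝ) ≤ ∫ θ, θ ^ 2 ∂G1 := integral_nonneg fun θ => sq_nonneg θ
          nlinarith [hf0.le]
  calc (∫⁻ s in Ioi (0:ℝ), ENNReal.ofReal (s * ∫ θ in Ioi s, gaussDens σ (x - θ) ∂G1))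
        * ENNReal.ofReal (margDens G1 σ x)⁻¹
      ≤ ENNReal.ofReal (margDens G1 σ x * (4 * x ^ 2 + 9 * V))
        * ENNReal.ofReal (margDens G1 σ x)⁻¹ := mul_le_mul_left key _
    _ = ENNReal.ofReal (4 * x ^ 2 + 9 * V) := by
        rw [← ENNReal.ofReal_mul (mul_nonneg hf0.le hx40)]
        congr 1
        field_simp

lemma postSurv_nonneg (G : Measure ℝ) (σ s x : ℝ) : 0 ≤ postSurv G σ s x :=
  div_nonneg (setIntegral_nonneg measurableSet_Ioi fun θ _ => gaussDens_nonneg _ _)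
    (integral_nonneg fun θ => gaussDens_nonneg _ _)

lemma lemB {V : ℝ} (hV : 0 < V) (G1 : Measure ℝ) [IsProbabilityMeasure G1]
    (hG1 : MeanZeroVarLe G1 V) {σ : ℝ} (hσ : 0 < σ) (μ : ℝ) :
    ∫ s in Ioi (0:ℝ), s * (∫ x, postSurv G1 σ s x * gaussDens σ (x - μ))
      ≤ 24 * σ ^ 2 + 8 * μ ^ 2 + 9 * V := by
  have hR0 : (0:ℝ) ≤ 24 * σ ^ 2 + 8 * μ ^ 2 + 9 * V := by positivity
  have smI : StronglyMeasurable
      (fun s : ℝ => ∫ x, postSurv G1 σ s x * gaussDens σ (x - μ)) := by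
    have h : StronglyMeasurable
        (fun p : ℝ × ℝ => postSurv G1 σ p.1 p.2 * gaussDens σ (p.2 - μ)) :=
      (sm_postSurv G1 σ).mul (((gaussDens_continuous σ).comp
        (continuous_snd.sub continuous_const)).stronglyMeasurable)
    exact h.integral_prod_right' (ν := volume)
  have hInonneg : ∀ s : ℝ, 0 ≤ ∫ x, postSurv G1 σ s x * gaussDens σ (x - μ) := fun s =>
    integral_nonneg fun x => mul_nonneg (postSurv_nonneg _ _ _ _) (gaussDens_nonneg _ _)
  have heq : ∫ s in Ioi (0:ℝ), s * (∫ x, postSurv G1 σ s x * gaussDens σ (x - μ))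
      = (∫⁻ s in Ioi (0:ℝ), ENNReal.ofReal
          (s * ∫ x, postSurv G1 σ s x * gaussDens σ (x - μ))).toReal := by
    rw [integral_eq_lintegral_of_nonneg_ae]
    · filter_upwards [ae_restrict_mem measurableSet_Ioi] with s hs
      exact mul_nonneg (le_of_lt hs) (hInonneg s)
    · exact ((stronglyMeasurable_id.mul smI).aestronglyMeasurable).restrict
  have hL : ∫⁻ s in Ioi (0:ℝ), ENNReal.ofReal
        (s * ∫ x, postSurv G1 σ s x * gaussDens σ (x - μ))
      ≤ ENNReal.ofReal (24 * σ ^ 2 + 8 * μ ^ 2 + 9 * V) := by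
    have step1 : ∫⁻ s in Ioi (0:ℝ), ENNReal.ofReal
          (s * ∫ x, postSurv G1 σ s x * gaussDens σ (x - μ))
        ≤ ∫⁻ s in Ioi (0:ℝ), ∫⁻ x,
            ENNReal.ofReal ((s * postSurv G1 σ s x) * gaussDens σ (x - μ)) := by
      apply lintegral_mono_ae
      rw [ae_restrict_iff' measurableSet_Ioi]
      apply ae_of_all
      intro s hs
      have h1 : s * ∫ x, postSurv G1 σ s x * gaussDens σ (x - μ)
          = ∫ x, (s * postSurv G1 σ s x) * gaussDens σ (x - μ) := by
        rw [← integral_const_mul]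
        simp_rw [mul_assoc]
      rw [h1]
      exact ofReal_int_le _ _ fun x => mul_nonneg
        (mul_nonneg (le_of_lt hs) (postSurv_nonneg _ _ _ _)) (gaussDens_nonneg _ _)
    have hmeasF : Measurable (fun z : ℝ × ℝ =>
        ENNReal.ofReal ((z.1 * postSurv G1 σ z.1 z.2) * gaussDens σ (z.2 - μ))) :=
      ENNReal.measurable_ofReal.comp
        ((measurable_fst.mul (sm_postSurv G1 σ).measurable).mul
          ((gaussDens_continuous σ).measurable.comp (measurable_snd.sub measurable_const)))
    have swap : ∫⁻ s in Ioi (0:ℝ), ∫⁻ x,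
          ENNReal.ofReal ((s * postSurv G1 σ s x) * gaussDens σ (x - μ))
        = ∫⁻ x, ∫⁻ s in Ioi (0:ℝ),
            ENNReal.ofReal ((s * postSurv G1 σ s x) * gaussDens σ (x - μ)) :=
      lintegral_lintegral_swap hmeasF.aemeasurable
    have inner : ∀ x : ℝ, (∫⁻ s in Ioi (0:ℝ),
          ENNReal.ofReal ((s * postSurv G1 σ s x) * gaussDens σ (x - μ)))
        ≤ ENNReal.ofReal ((4 * x ^ 2 + 9 * V) * gaussDens σ (x - μ)) := by
      intro x
      have hsplit : ∀ s ∈ Ioi (0:ℝ),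
          ENNReal.ofReal ((s * postSurv G1 σ s x) * gaussDens σ (x - μ))
            = ENNReal.ofReal (s * postSurv G1 σ s x)
              * ENNReal.ofReal (gaussDens σ (x - μ)) := fun s hs =>
        ENNReal.ofReal_mul (mul_nonneg (le_of_lt hs) (postSurv_nonneg _ _ _ _))
      rw [setLIntegral_congr_fun measurableSet_Ioi hsplit]
      rw [lintegral_mul_const' _ _ ENNReal.ofReal_ne_top]
      calc (∫⁻ s in Ioi (0:ℝ), ENNReal.ofReal (s * postSurv G1 σ s x))
            * ENNReal.ofReal (gaussDens σ (x - μ))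
          ≤ ENNReal.ofReal (4 * x ^ 2 + 9 * V) * ENNReal.ofReal (gaussDens σ (x - μ)) :=
            mul_le_mul_left (lemA hV G1 hG1 hσ x) _
        _ = ENNReal.ofReal ((4 * x ^ 2 + 9 * V) * gaussDens σ (x - μ)) :=
            (ENNReal.ofReal_mul (by positivity)).symm
    have hIntB : Integrable (fun x => (4 * x ^ 2 + 9 * V) * gaussDens σ (x - μ)) := by
      have hfe : (fun x => (4 * x ^ 2 + 9 * V) * gaussDens σ (x - μ))
          = fun x => 4 * (x ^ 2 * gaussDens σ (x - μ)) + (9 * V) * gaussDens σ (x - μ) := by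
        funext x; ring
      rw [hfe]
      exact ((integrable_sq_gaussDens_sub hσ μ).const_mul 4).add
        ((integrable_gaussDens_sub hσ μ).const_mul (9 * V))
    have hval : ∫ x, (4 * x ^ 2 + 9 * V) * gaussDens σ (x - μ)
        ≤ 24 * σ ^ 2 + 8 * μ ^ 2 + 9 * V := by
      have hfe : (fun x => (4 * x ^ 2 + 9 * V) * gaussDens σ (x - μ))
          = fun x => 4 * (x ^ 2 * gaussDens σ (x - μ)) + (9 * V) * gaussDens σ (x - μ) := by
        funext x; ring
      rw [hfe]
      rw [integral_add ((integrable_sq_gaussDens_sub hσ μ).const_mul 4)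
        ((integrable_gaussDens_sub hσ μ).const_mul (9 * V))]
      rw [integral_const_mul, integral_const_mul, int_gaussDens_sub hσ μ, mul_one]
      have := int_sq_gaussDens_sub_le hσ μ
      linarith
    calc ∫⁻ s in Ioi (0:ℝ), ENNReal.ofReal
          (s * ∫ x, postSurv G1 σ s x * gaussDens σ (x - μ))
        ≤ ∫⁻ s in Ioi (0:ℝ), ∫⁻ x,
            ENNReal.ofReal ((s * postSurv G1 σ s x) * gaussDens σ (x - μ)) := step1
      _ = ∫⁻ x, ∫⁻ s in Ioi (0:ℝ),
            ENNReal.ofReal ((s * postSurv G1 σ s x) * gaussDens σ (x - μ)) := swap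
      _ ≤ ∫⁻ x, ENNReal.ofReal ((4 * x ^ 2 + 9 * V) * gaussDens σ (x - μ)) :=
          lintegral_mono inner
      _ = ENNReal.ofReal (∫ x, (4 * x ^ 2 + 9 * V) * gaussDens σ (x - μ)) :=
          (ofReal_integral_eq_lintegral_ofReal hIntB (ae_of_all _ fun x =>
            mul_nonneg (by positivity) (gaussDens_nonneg _ _))).symm
      _ ≤ ENNReal.ofReal (24 * σ ^ 2 + 8 * μ ^ 2 + 9 * V) := ENNReal.ofReal_le_ofReal hval
  rw [heq]
  calc (∫⁻ s in Ioi (0:ℝ), ENNReal.ofReal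
        (s * ∫ x, postSurv G1 σ s x * gaussDens σ (x - μ))).toReal
      ≤ (ENNReal.ofReal (24 * σ ^ 2 + 8 * μ ^ 2 + 9 * V)).toReal :=
        ENNReal.toReal_mono ENNReal.ofReal_ne_top hL
    _ = 24 * σ ^ 2 + 8 * μ ^ 2 + 9 * V := ENNReal.toReal_ofReal hR0

/-- uniform bound on the `|μ| > σ` part, with `C` depending only on `V`. -/
theorem stmt_14 (V : ℝ) (hV : 0 < V) :
    ∃ C : ℝ, ∀ (G0 G1 : Measure ℝ)
      [IsProbabilityMeasure G0] [IsProbabilityMeasure G1] (σ : ℝ),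
      MeanZeroVarLe G0 V → MeanZeroVarLe G1 V → 0 < σ →
      (∫ μ in {μ : ℝ | σ < |μ|},
          (∫ s in Set.Ioi (0 : ℝ),
            s * (∫ x, postSurv G1 σ s x * gaussDens σ (x - μ))) ∂G0) ≤ C := by
  refine ⟨41 * V, ?_⟩
  intro G0 G1 _ _ σ hG0 hG1 hσ
  have hS : MeasurableSet {μ : ℝ | σ < |μ|} :=
    measurableSet_lt measurable_const continuous_abs.measurable
  have hFnonneg : ∀ μ : ℝ, 0 ≤ ∫ s in Ioi (0:ℝ),
      s * (∫ x, postSurv G1 σ s x * gaussDens σ (x - μ)) := by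
    intro μ
    apply setIntegral_nonneg measurableSet_Ioi
    intro s hs
    exact mul_nonneg (le_of_lt hs) (integral_nonneg fun x =>
      mul_nonneg (postSurv_nonneg _ _ _ _) (gaussDens_nonneg _ _))
  have hgi : Integrable (fun μ : ℝ => 24 * σ ^ 2 + 8 * μ ^ 2 + 9 * V)
      (G0.restrict {μ : ℝ | σ < |μ|}) := by
    have : Integrable (fun μ : ℝ => 24 * σ ^ 2 + 8 * μ ^ 2 + 9 * V) G0 := by
      have h1 : (fun μ : ℝ => 24 * σ ^ 2 + 8 * μ ^ 2 + 9 * V)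
          = fun μ : ℝ => 8 * μ ^ 2 + (24 * σ ^ 2 + 9 * V) := by funext μ; ring
      rw [h1]
      exact (hG0.2.1.const_mul 8).add (integrable_const _)
    exact this.restrict
  have hmain : ∫ μ in {μ : ℝ | σ < |μ|},
        (∫ s in Ioi (0:ℝ), s * (∫ x, postSurv G1 σ s x * gaussDens σ (x - μ))) ∂G0
      ≤ ∫ μ in {μ : ℝ | σ < |μ|}, (24 * σ ^ 2 + 8 * μ ^ 2 + 9 * V) ∂G0 := by
    apply integral_mono_of_nonneg (ae_of_all _ hFnonneg) hgi
    exact ae_of_all _ fun μ => lemB hV G1 hG1 hσ μ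
  refine hmain.trans ?_
  have hsplit : ∫ μ in {μ : ℝ | σ < |μ|}, (24 * σ ^ 2 + 8 * μ ^ 2 + 9 * V) ∂G0
      = 8 * (∫ μ in {μ : ℝ | σ < |μ|}, μ ^ 2 ∂G0)
        + (24 * σ ^ 2 + 9 * V) * (G0 {μ : ℝ | σ < |μ|}).toReal := by
    have h1 : (fun μ : ℝ => 24 * σ ^ 2 + 8 * μ ^ 2 + 9 * V)
        = fun μ : ℝ => 8 * μ ^ 2 + (24 * σ ^ 2 + 9 * V) := by funext μ; ring
    rw [h1, integral_add (hG0.2.1.const_mul 8).restrict (integrable_const _),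
      integral_const_mul, setIntegral_const, smul_eq_mul, measureReal_def]
    ring
  rw [hsplit]
  have hm0 : 0 ≤ (G0 {μ : ℝ | σ < |μ|}).toReal := ENNReal.toReal_nonneg
  have hm1 : (G0 {μ : ℝ | σ < |μ|}).toReal * σ ^ 2 ≤ V :=
    cheb G0 hG0.2.1 hG0.2.2.2 hσ
  have hm2 : (G0 {μ : ℝ | σ < |μ|}).toReal ≤ 1 := by
    have h1 : G0 {μ : ℝ | σ < |μ|} ≤ 1 := prob_le_one
    calc (G0 {μ : ℝ | σ < |μ|}).toReal ≤ (1 : ℝ≥0∞).toReal :=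
      ENNReal.toReal_mono ENNReal.one_ne_top h1
      _ = 1 := ENNReal.toReal_one
  have hs2 : ∫ μ in {μ : ℝ | σ < |μ|}, μ ^ 2 ∂G0 ≤ V :=
    (setIntegral_le_integral hG0.2.1 (ae_of_all _ fun μ => sq_nonneg μ)).trans hG0.2.2.2
  nlinarith [sq_nonneg σ, hσ, mul_nonneg hm0 (sq_nonneg σ), hV,
    mul_le_mul_of_nonneg_left hm2 (by linarith : (0:ℝ) ≤ 9 * V)]
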